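/- Let F be a field and d ≥ 1. Let Q_1, …, Q_{d+2} and R_1, …, R_{d+2} be two tuples of nonzero row vectors in F^{1×(d+1)}, each tuple in general position, meaning that every d+1 of the vectors in the tuple are linearly independent, and for each i let K_{R_i} ∈ F^{(d+1)×d} be a matrix whose columns form a basis of { w ∈ F^{(d+1)×1} : R_i · w = 0 }. Then the d(d+2) linear equations on M ∈ Mat_{(d+1)×(d+1)}(F) given by the entries of Q_i · M · K_{R_i} = 0 for i = 1, …, d+2 are linearly independent; equivalently, the linear map Mat_{(d+1)×(d+1)}(F) → (F^{1×d})^{d+2}, M ↦ (Q_1 M K_{R_1}, …, Q_{d+2} M K_{R_{d+2}}), is surjective, so its kernel has dimension (d+1)² − d(d+2) = 1. -/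

import Mathlib

/-!
Acting on row vectors, `M` satisfies `Qᵢ M K_{Rᵢ} = 0` exactly when it sends the line through
`Qᵢ` into the line through `Rᵢ`: the columns of `K_{Rᵢ}` span `ker Rᵢ`, whose annihilator is
that line. Two frames of `d + 2` vectors in general position in a `(d + 1)`-dimensional space
are matched by such a map, unique up to a scalar. Indeed, in the basis `Q₁, …, Q_{d+1}` the
vector `Q_{d+2}` has no zero coordinate, so comparing `Q_{d+2} M` with `R_{d+2}` forces the
scalars by which `M` rescales `Q₁, …, Q_{d+1}` to be determined by a single one. The kernel
is therefore a line, and surjectivity follows from rank–nullity as `(d + 1)² - 1 = d (d + 2)`.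
-/

open Module Submodule Matrix

section

variable {F : Type*} [Field F]

section GeneralPosition

variable {V W : Type*} [AddCommGroup V] [Module F V] [AddCommGroup W] [Module F W] {n : ℕ}

variable (F) in
def GeneralPosition (v : Fin (n + 2) → V) : Prop :=
  ∀ s : Finset (Fin (n + 2)), s.card = n + 1 → LinearIndependent F (fun i : s => v i)

namespace GeneralPosition

variable {v : Fin (n + 2) → V}

theorem map (hv : GeneralPosition F v) {f : V →ₗ[F] W} (hf : LinearMap.ker f = ⊥) :
    GeneralPosition F (f ∘ v) :=
  fun s hs => (hv s hs).map' f hf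

theorem linearIndependent_comp_succAbove (hv : GeneralPosition F v) (p : Fin (n + 2)) :
    LinearIndependent F (v ∘ p.succAbove) :=
  (hv (Finset.univ.map p.succAboveEmb) (by simp)).comp (fun j => ⟨p.succAbove j, by simp⟩)
    fun _ _ h => p.succAbove_right_injective (congrArg Subtype.val h)

theorem linearIndependent_comp_castSucc (hv : GeneralPosition F v) :
    LinearIndependent F (v ∘ Fin.castSucc) := by
  simpa using hv.linearIndependent_comp_succAbove (Fin.last _)

theorem ne_zero (hv : GeneralPosition F v) (i : Fin (n + 2)) : v i ≠ 0 := by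
  obtain ⟨p, hp⟩ := exists_ne i
  obtain ⟨j, rfl⟩ := Fin.exists_succAbove_eq hp.symm
  exact (hv.linearIndependent_comp_succAbove p).ne_zero j

noncomputable def basis (hv : GeneralPosition F v) (hV : finrank F V = n + 1) :
    Basis (Fin (n + 1)) F V :=
  basisOfLinearIndependentOfCardEqFinrank hv.linearIndependent_comp_castSucc (by simp [hV])

@[simp]
theorem basis_apply (hv : GeneralPosition F v) (hV : finrank F V = n + 1) (i : Fin (n + 1)) :
    hv.basis hV i = v i.castSucc := by
  simp [basis]

theorem basis_repr_last_ne_zero (hv : GeneralPosition F v) (hV : finrank F V = n + 1)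
    (i : Fin (n + 1)) : (hv.basis hV).repr (v (Fin.last _)) i ≠ 0 := by
  intro hi
  have hindep := hv.linearIndependent_comp_succAbove i.castSucc
  have hsnoc : v ∘ i.castSucc.succAbove =
      Fin.snoc (v ∘ Fin.castSucc ∘ i.succAbove) (v (Fin.last _)) := by
    ext j
    refine Fin.lastCases ?_ (fun j => ?_) j <;> simp
  rw [hsnoc, linearIndependent_finSnoc] at hindep
  apply hindep.2
  have hrange : (hv.basis hV) '' {i}ᶜ = Set.range (v ∘ Fin.castSucc ∘ i.succAbove) := by
    rw [← Fin.range_succAbove, ← Set.range_comp]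
    ext
    simp
  rw [← hrange, Basis.mem_span_image]
  rintro j hj rfl
  exact Finsupp.mem_support_iff.mp hj hi

end GeneralPosition
end GeneralPosition

section Frame

variable {V W : Type*} [AddCommGroup V] [Module F V] [AddCommGroup W] [Module F W]

variable (F) in
def mapsToLines {ι : Type*} (q : ι → V) (r : ι → W) : Submodule F (V →ₗ[F] W) where
  carrier := {f | ∀ i, f (q i) ∈ F ∙ r i}
  add_mem' hf hg i := add_mem (hf i) (hg i)
  zero_mem' _ := zero_mem _
  smul_mem' c _ hf i := smul_mem _ c (hf i)

@[simp]
theorem mem_mapsToLines {ι : Type*} {q : ι → V} {r : ι → W} {f : V →ₗ[F] W} :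
    f ∈ mapsToLines F q r ↔ ∀ i, f (q i) ∈ F ∙ r i :=
  Iff.rfl

variable {n : ℕ} {q : Fin (n + 2) → V} {r : Fin (n + 2) → W}

theorem eq_zero_of_mem_mapsToLines_of_apply_last_eq_zero (hq : GeneralPosition F q)
    (hV : finrank F V = n + 1) (hr : LinearIndependent F (r ∘ Fin.castSucc)) {g : V →ₗ[F] W}
    (hg : g ∈ mapsToLines F q r) (hlast : g (q (Fin.last _)) = 0) : g = 0 := by
  set b := hq.basis hV
  choose μ hμ using fun i : Fin (n + 1) => mem_span_singleton.mp (hg i.castSucc)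
  have hsum : ∑ i, (b.repr (q (Fin.last _)) i * μ i) • r i.castSucc = 0 := by
    conv_rhs => rw [← hlast, ← b.sum_repr (q (Fin.last _)), map_sum]
    refine Finset.sum_congr rfl fun i _ => ?_
    rw [map_smul, GeneralPosition.basis_apply, ← hμ, smul_smul]
  have hμ0 (i : Fin (n + 1)) : μ i = 0 :=
    (mul_eq_zero.mp (Fintype.linearIndependent_iff.mp hr _ hsum i)).resolve_left
      (hq.basis_repr_last_ne_zero hV i)
  exact b.ext fun i => by
    rw [GeneralPosition.basis_apply, ← hμ, hμ0, zero_smul, LinearMap.zero_apply]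

theorem exists_mem_mapsToLines_apply_last (hq : GeneralPosition F q) (hV : finrank F V = n + 1)
    (hr : GeneralPosition F r) (hW : finrank F W = n + 1) :
    ∃ f ∈ mapsToLines F q r, f (q (Fin.last _)) = r (Fin.last _) := by
  set a := (hq.basis hV).repr (q (Fin.last _))
  set b := (hr.basis hW).repr (r (Fin.last _))
  set f := (hq.basis hV).constr F fun i => (b i / a i) • r i.castSucc
  have hf (i : Fin (n + 1)) : f (q i.castSucc) = (b i / a i) • r i.castSucc := by
    rw [← GeneralPosition.basis_apply hq hV, Basis.constr_basis]
  have hlast : f (q (Fin.last _)) = r (Fin.last _) := by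
    conv_lhs => rw [← (hq.basis hV).sum_repr (q (Fin.last _))]
    conv_rhs => rw [← (hr.basis hW).sum_repr (r (Fin.last _))]
    rw [map_sum]
    refine Finset.sum_congr rfl fun i _ => ?_
    rw [map_smul, GeneralPosition.basis_apply, hf, smul_smul, GeneralPosition.basis_apply,
      mul_div_cancel₀ _ (hq.basis_repr_last_ne_zero hV i)]
  refine ⟨f, fun i => Fin.lastCases ?_ (fun i => ?_) i, hlast⟩
  · rw [hlast]
    exact mem_span_singleton_self _
  · rw [hf]
    exact smul_mem _ _ (mem_span_singleton_self _)

theorem finrank_mapsToLines_eq_one (hq : GeneralPosition F q) (hV : finrank F V = n + 1)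
    (hr : GeneralPosition F r) (hW : finrank F W = n + 1) :
    finrank F (mapsToLines F q r) = 1 := by
  obtain ⟨f, hf, hflast⟩ := exists_mem_mapsToLines_apply_last hq hV hr hW
  suffices mapsToLines F q r = F ∙ f by
    rw [this, finrank_span_singleton]
    rintro rfl
    exact hr.ne_zero _ hflast.symm
  refine le_antisymm (fun g hg => ?_) (span_singleton_le_iff_mem _ _ |>.mpr hf)
  obtain ⟨c, hc⟩ := mem_span_singleton.mp (hg (Fin.last _))
  have := eq_zero_of_mem_mapsToLines_of_apply_last_eq_zero hq hV hr.linearIndependent_comp_castSucc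
    (sub_mem hg (smul_mem _ c hf)) (by simp [hflast, hc])
  exact mem_span_singleton.mpr ⟨c, (sub_eq_zero.mp this).symm⟩

end Frame

section Matrices

variable {l m n ι : Type*}

theorem mem_span_singleton_iff_forall_dotProduct_eq_zero [Fintype n] [DecidableEq n]
    {r a : n → F} : a ∈ F ∙ r ↔ ∀ w, r ⬝ᵥ w = 0 → a ⬝ᵥ w = 0 := by
  refine ⟨fun h w hw => ?_, fun h => ?_⟩
  · obtain ⟨c, rfl⟩ := mem_span_singleton.mp h
    rw [smul_dotProduct, hw, smul_zero]
  · have : dotProductEquiv F n a ∈ span F (Set.range fun _ : Unit => dotProductEquiv F n r) :=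
      mem_span_of_iInf_ker_le_ker fun w hw => h w (by simpa using hw)
    rw [Set.range_const] at this
    obtain ⟨c, hc⟩ := mem_span_singleton.mp this
    exact mem_span_singleton.mpr ⟨c, (dotProductEquiv F n).injective (by rw [map_smul, hc])⟩

theorem Matrix.mul_eq_zero_iff_mem_span_singleton [Fintype n] [DecidableEq n]
    {A R : Matrix (Fin 1) n F} {K : Matrix n m F}
    (hK : span F (Set.range fun j i => K i j) = LinearMap.ker R.mulVecLin) :
    A * K = 0 ↔ A 0 ∈ F ∙ R 0 := by
  have hR (w : n → F) : w ∈ LinearMap.ker R.mulVecLin ↔ R 0 ⬝ᵥ w = 0 := by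
    simp [funext_iff, mulVec, Fin.forall_fin_one]
  have hAK : A * K = 0 ↔
      Set.range (fun j i => K i j) ⊆ LinearMap.ker (dotProductEquiv F n (A 0)) := by
    simp [← Matrix.ext_iff, Fin.forall_fin_one, Set.range_subset_iff, mul_apply, dotProduct]
  rw [hAK, ← span_le, hK, mem_span_singleton_iff_forall_dotProduct_eq_zero, SetLike.le_def]
  simp [hR]

@[simps]
def Matrix.sandwichLinearMap [Fintype n] (Q : ι → Matrix l n F) (K : ι → Matrix n m F) :
    Matrix n n F →ₗ[F] (ι → Matrix l m F) where
  toFun M i := Q i * M * K i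
  map_add' M N := by ext1 i; simp [Matrix.mul_add, Matrix.add_mul]
  map_smul' c M := by ext1 i; simp

def Matrix.vecMulLinearEquiv [Fintype m] [DecidableEq m] [Fintype n] :
    Matrix m n F ≃ₗ[F] ((m → F) →ₗ[F] (n → F)) :=
  (transposeLinearEquiv m n F F).trans toLin'

@[simp]
theorem Matrix.vecMulLinearEquiv_apply [Fintype m] [DecidableEq m] [Fintype n]
    (M : Matrix m n F) (v : m → F) :
    vecMulLinearEquiv M v = v ᵥ* M :=
  mulVec_transpose M v

end Matrices

theorem LinearMap.surjective_of_finrank_eq_add_finrank_ker {V W : Type*} [AddCommGroup V]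
    [Module F V] [AddCommGroup W] [Module F W] [FiniteDimensional F V] [FiniteDimensional F W]
    (f : V →ₗ[F] W) (h : finrank F V = finrank F W + finrank F (LinearMap.ker f)) :
    Function.Surjective f := by
  refine LinearMap.range_eq_top.mp (eq_top_of_finrank_eq ?_)
  have := f.finrank_range_add_finrank_ker
  omega

end

theorem geiser_linear_system_independent_conditions_general
    (F : Type*) [Field F] (d : ℕ)
    (Q R : Fin (d + 2) → Matrix (Fin 1) (Fin (d + 1)) F)
    (hQgen : ∀ s : Finset (Fin (d + 2)), s.card = d + 1 →
      LinearIndependent F (fun i : s => Q (i : Fin (d + 2))))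
    (hRgen : ∀ s : Finset (Fin (d + 2)), s.card = d + 1 →
      LinearIndependent F (fun i : s => R (i : Fin (d + 2))))
    (KR : Fin (d + 2) → Matrix (Fin (d + 1)) (Fin d) F)
    (hKR_span : ∀ i,
      Submodule.span F (Set.range (fun j : Fin d => fun r : Fin (d + 1) => KR i r j)) =
        LinearMap.ker (R i).mulVecLin) :
    Function.Surjective
      (fun M : Matrix (Fin (d + 1)) (Fin (d + 1)) F =>
        fun i : Fin (d + 2) => Q i * M * KR i) ∧
    ∃ W : Submodule F (Matrix (Fin (d + 1)) (Fin (d + 1)) F),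
      (W : Set (Matrix (Fin (d + 1)) (Fin (d + 1)) F)) =
          {M : Matrix (Fin (d + 1)) (Fin (d + 1)) F | ∀ i, Q i * M * KR i = 0} ∧
      Module.finrank F W = 1 := by
  set Φ := sandwichLinearMap Q KR
  set row := LinearEquiv.funUnique (Fin 1) F (Fin (d + 1) → F)
  have hker : LinearMap.ker Φ = (mapsToLines F (fun i => Q i 0) (fun i => R i 0)).comap
      vecMulLinearEquiv.toLinearMap := by
    ext M
    simp [Φ, funext_iff, mul_eq_zero_iff_mem_span_singleton (hKR_span _), mul_apply_eq_vecMul]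
  have hrank : finrank F (LinearMap.ker Φ) = 1 := by
    rw [hker, comap_equiv_eq_map_symm, LinearEquiv.finrank_map_eq]
    exact finrank_mapsToLines_eq_one (GeneralPosition.map hQgen row.ker) (by simp)
      (GeneralPosition.map hRgen row.ker) (by simp)
  refine ⟨Φ.surjective_of_finrank_eq_add_finrank_ker ?_, LinearMap.ker Φ, ?_, hrank⟩
  · simp [hrank, finrank_matrix, finrank_pi_fintype]
    ring
  · ext M
    simp [Φ, funext_iff]

/-- With `Qᵢ, Rᵢ` two tuples of `d+2` nonzero row vectors in general position
(every `d+1` linearly independent) and `K_{Rᵢ}` matrices whose columns form a basis of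
`ker Rᵢ`, the `d(d+2)` linear conditions `Qᵢ · M · K_{Rᵢ} = 0` on
`M ∈ Mat_{(d+1)×(d+1)}(F)` are independent: the map
`M ↦ (Q₁ M K_{R₁}, …, Q_{d+2} M K_{R_{d+2}})` is surjective and its kernel has
dimension `(d+1)² − d(d+2) = 1`. -/
theorem geiser_linear_system_independent_conditions
    (F : Type*) [Field F] (d : ℕ) (hd : 1 ≤ d)
    (Q R : Fin (d + 2) → Matrix (Fin 1) (Fin (d + 1)) F)
    (hQ0 : ∀ i, Q i ≠ 0) (hR0 : ∀ i, R i ≠ 0)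
    (hQgen : ∀ s : Finset (Fin (d + 2)), s.card = d + 1 →
      LinearIndependent F (fun i : s => Q (i : Fin (d + 2))))
    (hRgen : ∀ s : Finset (Fin (d + 2)), s.card = d + 1 →
      LinearIndependent F (fun i : s => R (i : Fin (d + 2))))
    (KR : Fin (d + 2) → Matrix (Fin (d + 1)) (Fin d) F)
    (hKR_li : ∀ i, LinearIndependent F
      (fun j : Fin d => fun r : Fin (d + 1) => KR i r j))
    (hKR_span : ∀ i,
      Submodule.span F (Set.range (fun j : Fin d => fun r : Fin (d + 1) => KR i r j)) =
        LinearMap.ker (R i).mulVecLin) :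
    Function.Surjective
      (fun M : Matrix (Fin (d + 1)) (Fin (d + 1)) F =>
        fun i : Fin (d + 2) => Q i * M * KR i) ∧
    ∃ W : Submodule F (Matrix (Fin (d + 1)) (Fin (d + 1)) F),
      (W : Set (Matrix (Fin (d + 1)) (Fin (d + 1)) F)) =
          {M : Matrix (Fin (d + 1)) (Fin (d + 1)) F | ∀ i, Q i * M * KR i = 0} ∧
      Module.finrank F W = 1 :=
  geiser_linear_system_independent_conditions_general F d Q R hQgen hRgen KR hKR_span
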